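/- Fix λ > 0. Then f has a logarithmic singularity at the endpoint −λ²s of its cut: there exist δ, C > 0 such that for all z with 0 < |z + λ²s| < δ and z ∉ (−∞, −λ²s], | f(z;λ) − ((λ²s)^{α} e^{−2/s^{k}}/(2πi)) · Log(z + λ²s) | ≤ C, where Log denotes the principal branch of the logarithm with cut (−∞, −λ²s] (i.e., Log(z+λ²s) with arg(z+λ²s) ∈ (−π, π)). -/

import Mathlib

open Complex Set MeasureTheory

/-- The Cauchy-type integral
`f(z;λ) = (e^{−z}/(2πi)) ∫_{−∞}^{−λ²s} |x|^α e^x e^{2(−1)^{k+1} λ^{2k}/x^k} (x−z)^{−1} dx`. -/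
noncomputable def fFun (k : ℕ) (α s : ℝ) (lam : ℝ) (z : ℂ) : ℂ :=
  (Complex.exp (-z) / (2 * Real.pi * Complex.I)) *
    ∫ x in Iic (-(lam ^ 2 * s)),
      ((|x| ^ α : ℝ) : ℂ) * Complex.exp (x : ℂ) *
        Complex.exp (2 * (-1 : ℂ) ^ (k + 1) * ((lam ^ (2 * k) : ℝ) : ℂ) * (x : ℂ) ^ (-(k : ℤ)))
        / ((x : ℂ) - z)

/-!
Write `a = λ²s`, `w = z + a`, and `g` for the numerator of the integrand, so that
`f(z) = e^{-z}/(2πi) ∫_{-∞}^{-a} g(x)/(x - z) dx`. The function `g` is `C¹` on `(-∞, 0)` and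
dominated by `|x|^α e^x`, hence integrable on `(-∞, -a]` and Lipschitz on `[-a-1, -a]`.
On `(-∞, -a-1]` the kernel is bounded. On `(-a-1, -a]` write `g(x) = g(t) + O(|x - t|)`, where
`t` is the point of the cut closest to `z`, so that `|x - t| ≤ |x - z|` and the error term is
bounded; the constant `g(t)` integrates exactly to `g(t) (Log w - Log (w + 1))`. Replacing
`g(t)` by `g(-a)` and `e^{-z}` by `e^a` costs `O(|w| |Log w|) = O(1)`, and
`e^a g(-a) = (λ²s)^α e^{-2/s^k}`.
-/

namespace Complex

lemma norm_log_le_abs_log_norm_add_pi (w : ℂ) : ‖log w‖ ≤ |Real.log ‖w‖| + Real.pi := by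
  calc ‖log w‖ ≤ |(log w).re| + |(log w).im| := norm_le_abs_re_add_abs_im _
    _ ≤ |Real.log ‖w‖| + Real.pi := by
      rw [log_re, log_im]; gcongr; exact abs_arg_le_pi w

lemma norm_mul_norm_log_le {w : ℂ} (hw : ‖w‖ ≤ 1) : ‖w‖ * ‖log w‖ ≤ 1 + Real.pi := by
  rcases eq_or_ne w 0 with rfl | hw0
  · simp; positivity
  calc ‖w‖ * ‖log w‖ ≤ ‖w‖ * (|Real.log ‖w‖| + Real.pi) := by
        gcongr; exact norm_log_le_abs_log_norm_add_pi w
    _ = |Real.log ‖w‖ * ‖w‖| + ‖w‖ * Real.pi := by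
        rw [abs_mul, abs_norm]; ring
    _ ≤ 1 + 1 * Real.pi := by
        gcongr
        exact (Real.abs_log_mul_self_lt _ (norm_pos_iff.2 hw0) hw).le
    _ = 1 + Real.pi := by ring

lemma norm_div_two_pi_I_le (w : ℂ) : ‖w / (2 * Real.pi * I)‖ ≤ ‖w‖ := by
  rw [norm_div, norm_mul, norm_mul, norm_I, Complex.norm_two, norm_real,
    Real.norm_of_nonneg Real.pi_pos.le, mul_one]
  exact div_le_self (norm_nonneg w) (by linarith [Real.pi_gt_three])

lemma add_ofReal_mem_slitPlane {w : ℂ} (hw : w ∈ slitPlane) {r : ℝ} (hr : 0 ≤ r) :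
    w + r ∈ slitPlane := by
  rw [mem_slitPlane_iff] at hw ⊢
  simp only [add_re, ofReal_re, add_im, ofReal_im, add_zero]
  exact hw.imp (fun h => by linarith) id

lemma integral_inv_ofReal_sub {z : ℂ} {c d : ℝ} (hcd : c ≤ d)
    (hz : ∀ x ∈ Icc c d, z - x ∈ slitPlane) :
    ∫ x in c..d, ((x : ℂ) - z)⁻¹ = log (z - d) - log (z - c) := by
  rw [← uIcc_of_le hcd] at hz
  have hderiv : ∀ x ∈ uIcc c d,
      HasDerivAt (fun y : ℝ => log (z - y)) ((x : ℂ) - z)⁻¹ x := by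
    intro x hx
    rw [← neg_sub, inv_neg, ← mul_neg_one]
    exact ((hasDerivAt_log (hz x hx)).comp (x : ℂ) ((hasDerivAt_id _).const_sub z)).comp_ofReal
  refine intervalIntegral.integral_eq_sub_of_hasDerivAt hderiv
    (ContinuousOn.intervalIntegrable ?_)
  exact (continuous_ofReal.continuousOn.sub continuousOn_const).inv₀
    fun x hx => sub_ne_zero.2 fun h => slitPlane_ne_zero (hz x hx) (by rw [h, sub_self])

end Complex

lemma abs_sub_min_le_abs_sub {x y b : ℝ} (hx : x ≤ b) : |x - min y b| ≤ |x - y| := by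
  rcases le_total y b with h | h
  · rw [min_eq_left h]
  · rw [min_eq_right h, abs_of_nonpos (by linarith), abs_of_nonpos (by linarith)]
    linarith

section CauchyKernel

variable {g : ℝ → ℂ} {s : Set ℝ} {z : ℂ} {ρ : ℝ}

lemma norm_div_ofReal_sub_le (hρ : 0 < ρ) {x : ℝ} (hx : ρ ≤ ‖(x : ℂ) - z‖) :
    ‖g x / ((x : ℂ) - z)‖ ≤ ρ⁻¹ * ‖g x‖ := by
  rw [norm_div, div_eq_inv_mul]
  gcongr

lemma MeasureTheory.IntegrableOn.div_ofReal_sub (hg : IntegrableOn g s) (hs : MeasurableSet s)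
    (hρ : 0 < ρ) (hz : ∀ x ∈ s, ρ ≤ ‖(x : ℂ) - z‖) :
    IntegrableOn (fun x : ℝ => g x / ((x : ℂ) - z)) s := by
  refine Integrable.mono' (hg.norm.const_mul ρ⁻¹)
    (hg.aestronglyMeasurable.mul
      (by fun_prop : Measurable fun x : ℝ => ((x : ℂ) - z)⁻¹).aestronglyMeasurable) ?_
  exact (ae_restrict_iff' hs).2 (ae_of_all _ fun x hx => norm_div_ofReal_sub_le hρ (hz x hx))

lemma norm_setIntegral_div_ofReal_sub_le (hg : IntegrableOn g s) (hs : MeasurableSet s)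
    (hρ : 0 < ρ) (hz : ∀ x ∈ s, ρ ≤ ‖(x : ℂ) - z‖) :
    ‖∫ x in s, g x / ((x : ℂ) - z)‖ ≤ ρ⁻¹ * ∫ x in s, ‖g x‖ := by
  rw [← integral_const_mul]
  exact norm_integral_le_of_norm_le (hg.norm.const_mul ρ⁻¹)
    ((ae_restrict_iff' hs).2 (ae_of_all _ fun x hx => norm_div_ofReal_sub_le hρ (hz x hx)))

end CauchyKernel

section CauchyIntegral

variable {g : ℝ → ℂ} {b : ℝ} {z : ℂ}

lemma sub_ofReal_mem_slitPlane (hz : z - b ∈ slitPlane) {x : ℝ} (hx : x ≤ b) :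
    z - x ∈ slitPlane := by
  convert add_ofReal_mem_slitPlane hz (sub_nonneg.2 hx) using 1
  push_cast; ring

lemma ofReal_sub_ne_zero (hz : z - b ∈ slitPlane) {x : ℝ} (hx : x ≤ b) : (x : ℂ) - z ≠ 0 :=
  sub_ne_zero.2 (sub_ne_zero.1 (slitPlane_ne_zero (sub_ofReal_mem_slitPlane hz hx))).symm

lemma half_le_norm_ofReal_sub (hzb : ‖z - b‖ ≤ 1 / 2) {x : ℝ} (hx : x ≤ b - 1) :
    1 / 2 ≤ ‖(x : ℂ) - z‖ := by
  have hre : |z.re - b| ≤ 1 / 2 := by simpa using (abs_re_le_norm (z - b)).trans hzb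
  calc 1 / 2 ≤ z.re - x := by linarith [(abs_le.1 hre).1]
    _ ≤ |x - z.re| := by rw [abs_sub_comm]; exact le_abs_self _
    _ ≤ ‖(x : ℂ) - z‖ := by simpa using abs_re_le_norm ((x : ℂ) - z)

lemma setIntegral_Iic_div_ofReal_sub_eq (hg : IntegrableOn g (Iic b))
    (hgc : ContinuousOn g (Icc (b - 1) b)) (hz : z - b ∈ slitPlane) (hzb : ‖z - b‖ ≤ 1 / 2)
    (t : ℝ) :
    ∫ x in Iic b, g x / ((x : ℂ) - z) =
      (∫ x in Iic (b - 1), g x / ((x : ℂ) - z)) +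
        (∫ x in Ioc (b - 1) b, (g x - g t) / ((x : ℂ) - z)) +
        g t * (log (z - b) - log (z - b + 1)) := by
  have hsub : ContinuousOn (fun x : ℝ => (x : ℂ) - z) (Icc (b - 1) b) := by fun_prop
  have hne : ∀ x ∈ Icc (b - 1) b, (x : ℂ) - z ≠ 0 := fun x hx => ofReal_sub_ne_zero hz hx.2
  have hnear : IntegrableOn (fun x : ℝ => (g x - g t) / ((x : ℂ) - z)) (Ioc (b - 1) b) :=
    ((hgc.sub continuousOn_const).div hsub hne).integrableOn_Icc.mono_set Ioc_subset_Icc_self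
  have hinv : IntegrableOn (fun x : ℝ => ((x : ℂ) - z)⁻¹) (Ioc (b - 1) b) :=
    (hsub.inv₀ hne).integrableOn_Icc.mono_set Ioc_subset_Icc_self
  have hfar : IntegrableOn (fun x : ℝ => g x / ((x : ℂ) - z)) (Iic (b - 1)) :=
    (hg.mono_set (Iic_subset_Iic.2 (by linarith))).div_ofReal_sub measurableSet_Iic
      one_half_pos fun x hx => half_le_norm_ofReal_sub hzb hx
  have hlog : ∫ x in Ioc (b - 1) b, ((x : ℂ) - z)⁻¹ = log (z - b) - log (z - b + 1) := by
    rw [← intervalIntegral.integral_of_le (by linarith),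
      integral_inv_ofReal_sub (by linarith) fun x hx => sub_ofReal_mem_slitPlane hz hx.2]
    push_cast; ring_nf
  have hsplit : ∫ x in Ioc (b - 1) b, g x / ((x : ℂ) - z) =
      (∫ x in Ioc (b - 1) b, (g x - g t) / ((x : ℂ) - z)) +
        g t * ∫ x in Ioc (b - 1) b, ((x : ℂ) - z)⁻¹ := by
    rw [← integral_const_mul, ← integral_add hnear (hinv.const_mul _)]
    congr 1 with x
    ring
  rw [← Iic_union_Ioc_eq_Iic (show b - 1 ≤ b by linarith),
    setIntegral_union (Iic_disjoint_Ioc le_rfl) measurableSet_Ioc hfar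
      (((hgc.div hsub hne).integrableOn_Icc).mono_set Ioc_subset_Icc_self),
    hsplit, hlog, add_assoc]

lemma norm_setIntegral_Iic_sub_one_div_le (hg : IntegrableOn g (Iic b)) (hzb : ‖z - b‖ ≤ 1 / 2) :
    ‖∫ x in Iic (b - 1), g x / ((x : ℂ) - z)‖ ≤ 2 * ∫ x in Iic b, ‖g x‖ := by
  have hsub : Iic (b - 1) ⊆ Iic b := Iic_subset_Iic.2 (by linarith)
  calc _ ≤ (1 / 2)⁻¹ * ∫ x in Iic (b - 1), ‖g x‖ :=
        norm_setIntegral_div_ofReal_sub_le (hg.mono_set hsub) measurableSet_Iic one_half_pos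
          fun x hx => half_le_norm_ofReal_sub hzb hx
    _ ≤ 2 * ∫ x in Iic b, ‖g x‖ := by
        norm_num
        exact setIntegral_mono_set hg.norm (ae_of_all _ fun _ => norm_nonneg _)
          hsub.eventuallyLE

lemma norm_setIntegral_Ioc_sub_div_ofReal_sub_le {K : NNReal}
    (hlip : LipschitzOnWith K g (Icc (b - 1) b)) {t : ℝ} (ht : t ∈ Icc (b - 1) b)
    (hzt : ∀ x ≤ b, |x - t| ≤ ‖(x : ℂ) - z‖) :
    ‖∫ x in Ioc (b - 1) b, (g x - g t) / ((x : ℂ) - z)‖ ≤ K := by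
  have := norm_setIntegral_le_of_norm_le_const (C := (K : ℝ))
    (f := fun x : ℝ => (g x - g t) / ((x : ℂ) - z)) (μ := volume) measure_Ioc_lt_top
    fun x (hx : x ∈ Ioc (b - 1) b) => by
      rw [norm_div]
      refine div_le_of_le_mul₀ (norm_nonneg _) K.coe_nonneg ?_
      calc ‖g x - g t‖ ≤ K * |x - t| := by
            simpa only [dist_eq_norm, Real.norm_eq_abs]
              using hlip.dist_le_mul x (Ioc_subset_Icc_self hx) t ht
        _ ≤ K * ‖(x : ℂ) - z‖ := by gcongr; exact hzt x hx.2
  simpa [measureReal_def, Real.volume_Ioc] using this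

theorem exists_norm_setIntegral_Iic_div_sub_log_le {K : NNReal} (hg : IntegrableOn g (Iic b))
    (hlip : LipschitzOnWith K g (Icc (b - 1) b)) :
    ∃ C, ∀ z : ℂ, z - b ∈ slitPlane → ‖z - b‖ ≤ 1 / 2 →
      ‖(∫ x in Iic b, g x / ((x : ℂ) - z)) - g b * log (z - b)‖ ≤ C := by
  refine ⟨2 * (∫ x in Iic b, ‖g x‖) + K + K * (2 + Real.pi) + ‖g b‖, fun z hz hzb => ?_⟩
  have hre : |z.re - b| ≤ ‖z - b‖ := by simpa using abs_re_le_norm (z - b)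
  -- `t` is the point of the cut closest to `z`.
  set t := min z.re b
  have ht : t ∈ Icc (b - 1) b :=
    ⟨le_min (by linarith [(abs_le.1 (hre.trans hzb)).1]) (by linarith), min_le_right _ _⟩
  have htb : |t - b| ≤ ‖z - b‖ := by
    rcases le_total z.re b with h | h
    · rwa [show t = z.re from min_eq_left h]
    · simp [show t = b from min_eq_right h]
  have hzt : ∀ x ≤ b, |x - t| ≤ ‖(x : ℂ) - z‖ := fun x hx =>
    (abs_sub_min_le_abs_sub hx).trans (by simpa using abs_re_le_norm ((x : ℂ) - z))
  have hL₁ : ‖log (z - b + 1)‖ ≤ 3 / 4 := by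
    rw [add_comm]
    exact (norm_log_one_add_half_le_self hzb).trans (by linarith)
  set L₀ := log (z - b)
  set L₁ := log (z - b + 1)
  have hlin : ‖(g t - g b) * (L₀ - L₁)‖ ≤ K * (2 + Real.pi) := by
    calc _ ≤ K * ‖z - b‖ * (‖L₀‖ + ‖L₁‖) := by
          rw [norm_mul]
          gcongr
          · calc ‖g t - g b‖ ≤ K * |t - b| := by
                  simpa only [dist_eq_norm, Real.norm_eq_abs]
                    using hlip.dist_le_mul t ht b (right_mem_Icc.2 (by linarith))
              _ ≤ K * ‖z - b‖ := by gcongr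
          · exact norm_sub_le _ _
      _ = K * (‖z - b‖ * ‖L₀‖ + ‖z - b‖ * ‖L₁‖) := by ring
      _ ≤ K * ((1 + Real.pi) + 1 * 1) := by
          gcongr
          · exact norm_mul_norm_log_le (hzb.trans (by norm_num))
          · exact hzb.trans (by norm_num)
          · exact hL₁.trans (by norm_num)
      _ = K * (2 + Real.pi) := by ring
  have hend : ‖g b * L₁‖ ≤ ‖g b‖ := by
    rw [norm_mul]
    exact mul_le_of_le_one_right (norm_nonneg _) (hL₁.trans (by norm_num))
  have hfar := norm_setIntegral_Iic_sub_one_div_le hg hzb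
  have hnear := norm_setIntegral_Ioc_sub_div_ofReal_sub_le hlip ht hzt
  rw [setIntegral_Iic_div_ofReal_sub_eq hg hlip.continuousOn hz hzb t]
  set A := ∫ x in Iic (b - 1), g x / ((x : ℂ) - z)
  set B := ∫ x in Ioc (b - 1) b, (g x - g t) / ((x : ℂ) - z)
  calc ‖A + B + g t * (L₀ - L₁) - g b * L₀‖ = ‖A + B + (g t - g b) * (L₀ - L₁) - g b * L₁‖ := by
        ring_nf
    _ ≤ ‖A‖ + ‖B‖ + ‖(g t - g b) * (L₀ - L₁)‖ + ‖g b * L₁‖ :=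
        (norm_sub_le _ _).trans (by gcongr; exact norm_add₃_le)
    _ ≤ _ := by linarith

theorem exists_norm_exp_mul_setIntegral_Iic_div_sub_log_le {K : NNReal}
    (hg : IntegrableOn g (Iic b)) (hlip : LipschitzOnWith K g (Icc (b - 1) b)) :
    ∃ C, ∀ z : ℂ, z - b ∈ slitPlane → ‖z - b‖ ≤ 1 / 2 →
      ‖exp (-z) * (∫ x in Iic b, g x / ((x : ℂ) - z)) - exp (-b) * g b * log (z - b)‖ ≤ C := by
  obtain ⟨C, hC⟩ := exists_norm_setIntegral_Iic_div_sub_log_le hg hlip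
  refine ⟨Real.exp (1 / 2 - b) * C + ‖exp (-b) * g b‖ * (2 * (1 + Real.pi)),
    fun z hz hzb => ?_⟩
  have hexp : ‖exp (-z)‖ ≤ Real.exp (1 / 2 - b) := by
    have hre : |z.re - b| ≤ 1 / 2 := by simpa using (abs_re_le_norm (z - b)).trans hzb
    rw [norm_exp, neg_re]
    gcongr
    linarith [(abs_le.1 hre).1]
  have hsmall : ‖exp (-(z - b)) - 1‖ * ‖log (z - b)‖ ≤ 2 * (1 + Real.pi) := by
    have hzb₁ : ‖z - b‖ ≤ 1 := hzb.trans (by norm_num)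
    calc _ ≤ 2 * ‖z - b‖ * ‖log (z - b)‖ := by
          gcongr
          exact (norm_exp_sub_one_le (by rwa [norm_neg])).trans_eq (by rw [norm_neg])
      _ = 2 * (‖z - b‖ * ‖log (z - b)‖) := by ring
      _ ≤ 2 * (1 + Real.pi) := by gcongr; exact norm_mul_norm_log_le hzb₁
  set I := ∫ x in Iic b, g x / ((x : ℂ) - z)
  have hsplit : exp (-z) * I - exp (-b) * g b * log (z - b) =
      exp (-z) * (I - g b * log (z - b)) +
        exp (-b) * g b * ((exp (-(z - b)) - 1) * log (z - b)) := by
    have : exp (-z) = exp (-b) * exp (-(z - b)) := by rw [← exp_add]; ring_nf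
    rw [this]; ring
  rw [hsplit]
  refine (norm_add_le _ _).trans (add_le_add ?_ ?_)
  · rw [norm_mul]
    exact mul_le_mul hexp (hC z hz hzb) (norm_nonneg _) (Real.exp_pos _).le
  · rw [norm_mul _ ((exp _ - 1) * _), norm_mul (exp _ - 1)]
    exact mul_le_mul_of_nonneg_left hsmall (norm_nonneg _)

end CauchyIntegral

open Filter Asymptotics in
lemma integrableOn_abs_rpow_mul_exp_Iic (α : ℝ) {c : ℝ} (hc : c < 0) :
    IntegrableOn (fun x : ℝ => |x| ^ α * Real.exp x) (Iic c) := by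
  have hcont : ContinuousOn (fun x : ℝ => |x| ^ α * Real.exp x) (Iic c) :=
    (continuous_abs.continuousOn.rpow_const fun x (hx : x ≤ c) =>
      Or.inl (abs_pos.2 (by linarith)).ne').mul Real.continuous_exp.continuousOn
  have hdecay : Tendsto (fun x : ℝ => |x| ^ α * Real.exp (1 / 2 * x)) atBot (nhds 0) := by
    refine ((tendsto_rpow_mul_exp_neg_mul_atTop_nhds_zero α (1 / 2) one_half_pos).comp
      tendsto_neg_atBot_atTop).congr' ?_
    filter_upwards [eventually_lt_atBot 0] with x hx
    simp [abs_of_neg hx]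
  have hO : (fun x : ℝ => |x| ^ α * Real.exp x) =O[atBot] fun x => Real.exp (1 / 2 * x) := by
    refine ((hdecay.isBigO_one ℝ).mul (isBigO_refl (fun x => Real.exp (1 / 2 * x)) _)).congr
      (fun x => ?_) (fun x => one_mul _)
    rw [mul_assoc, ← Real.exp_add]; ring_nf
  exact (hcont.locallyIntegrableOn measurableSet_Iic).integrableOn_of_isBigO_atBot hO
    ⟨Iic 0, Iic_mem_atBot 0, integrableOn_exp_mul_Iic one_half_pos 0⟩

noncomputable def fDensity (k : ℕ) (α lam : ℝ) (x : ℝ) : ℂ :=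
  ((|x| ^ α : ℝ) : ℂ) * Complex.exp (x : ℂ) *
    Complex.exp (2 * (-1 : ℂ) ^ (k + 1) * ((lam ^ (2 * k) : ℝ) : ℂ) * (x : ℂ) ^ (-(k : ℤ)))

section fDensity

variable (k : ℕ) (α lam : ℝ)

lemma fFun_eq (s : ℝ) (z : ℂ) :
    fFun k α s lam z = exp (-z) / (2 * Real.pi * I) *
      ∫ x in Iic (-(lam ^ 2 * s)), fDensity k α lam x / ((x : ℂ) - z) :=
  rfl

lemma fDensity_of_neg {x : ℝ} (hx : x < 0) :
    fDensity k α lam x = ((|x| ^ α * Real.exp (x - 2 * lam ^ (2 * k) / |x| ^ k) : ℝ) : ℂ) := by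
  have hx' : (x : ℂ) = -1 * ((|x| : ℝ) : ℂ) := by rw [abs_of_neg hx]; push_cast; ring
  have hexp : 2 * (-1 : ℂ) ^ (k + 1) * ((lam ^ (2 * k) : ℝ) : ℂ) * (x : ℂ) ^ (-(k : ℤ)) =
      ((-(2 * lam ^ (2 * k) / |x| ^ k) : ℝ) : ℂ) := by
    rw [zpow_neg, zpow_natCast, hx', mul_pow]
    push_cast
    field_simp
    ring
  rw [fDensity, hexp, ← ofReal_exp, ← ofReal_exp, ← ofReal_mul, ← ofReal_mul, mul_assoc,
    ← Real.exp_add, sub_eq_add_neg]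

lemma norm_fDensity_le {x : ℝ} (hx : x < 0) : ‖fDensity k α lam x‖ ≤ |x| ^ α * Real.exp x := by
  rw [fDensity_of_neg k α lam hx, norm_real, Real.norm_of_nonneg (by positivity)]
  gcongr
  linarith [show 0 ≤ 2 * lam ^ (2 * k) / |x| ^ k by rw [pow_mul]; positivity]

lemma contDiffOn_fDensity : ContDiffOn ℝ 1 (fDensity k α lam) (Iio 0) := by
  intro x (hx : x < 0)
  apply ContDiffAt.contDiffWithinAt
  have hofReal : ContDiff ℝ 1 (fun y : ℝ => (y : ℂ)) := ofRealCLM.contDiff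
  have habs : ContDiffAt ℝ 1 (fun y : ℝ => ((|y| ^ α : ℝ) : ℂ)) x :=
    hofReal.contDiffAt.comp x
      ((contDiffAt_abs hx.ne).rpow_const_of_ne (abs_pos.2 hx.ne).ne')
  have hzpow : ContDiffAt ℝ 1 (fun y : ℝ => (y : ℂ) ^ (-(k : ℤ))) x := by
    simp only [zpow_neg, zpow_natCast]
    exact (hofReal.contDiffAt.pow k).inv (pow_ne_zero k (ofReal_ne_zero.2 hx.ne))
  unfold fDensity
  fun_prop

lemma integrableOn_fDensity {c : ℝ} (hc : c < 0) : IntegrableOn (fDensity k α lam) (Iic c) := by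
  have hsub : Iic c ⊆ Iio 0 := Iic_subset_Iio.2 hc
  refine Integrable.mono' (integrableOn_abs_rpow_mul_exp_Iic α hc)
    (((contDiffOn_fDensity k α lam).continuousOn.mono hsub).aestronglyMeasurable
      measurableSet_Iic) ?_
  exact (ae_restrict_iff' measurableSet_Iic).2
    (ae_of_all _ fun x hx => norm_fDensity_le k α lam (hsub hx))

lemma exists_lipschitzOnWith_fDensity {c : ℝ} (hc : c < 0) :
    ∃ K : NNReal, LipschitzOnWith K (fDensity k α lam) (Icc (c - 1) c) :=
  ((contDiffOn_fDensity k α lam).mono fun _ hx => lt_of_le_of_lt hx.2 hc).exists_lipschitzOnWith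
    one_ne_zero (convex_Icc _ _) isCompact_Icc

lemma exp_mul_fDensity_neg_sq_mul {s : ℝ} (hs : 0 < s) (hlam : lam ≠ 0) :
    exp (-((-(lam ^ 2 * s) : ℝ) : ℂ)) * fDensity k α lam (-(lam ^ 2 * s)) =
      (((lam ^ 2 * s) ^ α * Real.exp (-(2 / s ^ k)) : ℝ) : ℂ) := by
  have ha : 0 < lam ^ 2 * s := by positivity
  rw [fDensity_of_neg k α lam (neg_lt_zero.2 ha), abs_neg, abs_of_pos ha, ← ofReal_neg,
    neg_neg, ← ofReal_exp, ← ofReal_mul]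
  congr 1
  rw [mul_left_comm, ← Real.exp_add, mul_pow, ← pow_mul]
  congr 2
  field_simp
  ring

end fDensity

theorem fFun_log_singularity_at_endpoint_general (k : ℕ) (α s : ℝ)
    (hs : 0 < s) (lam : ℝ) (hlam : 0 < lam) :
    ∃ δ > (0 : ℝ), ∃ C > (0 : ℝ), ∀ z : ℂ,
      0 < ‖z + (lam ^ 2 * s : ℝ)‖ →
      ‖z + (lam ^ 2 * s : ℝ)‖ < δ →
      ¬((z + (lam ^ 2 * s : ℝ)).im = 0 ∧ (z + (lam ^ 2 * s : ℝ)).re ≤ 0) →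
      ‖fFun k α s lam z -
          ((((lam ^ 2 * s) ^ α * Real.exp (-(2 / s ^ k)) : ℝ)) : ℂ)
            / (2 * Real.pi * Complex.I) * Complex.log (z + (lam ^ 2 * s : ℝ))‖
        ≤ C := by
  have hb : -(lam ^ 2 * s) < 0 := neg_lt_zero.2 (by positivity)
  obtain ⟨K, hK⟩ := exists_lipschitzOnWith_fDensity k α lam hb
  obtain ⟨C, hC⟩ :=
    exists_norm_exp_mul_setIntegral_Iic_div_sub_log_le (integrableOn_fDensity k α lam hb) hK
  refine ⟨1 / 2, one_half_pos, max C 1, by positivity, fun z _ hzδ hcut => ?_⟩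
  have hzb : z - ((-(lam ^ 2 * s) : ℝ) : ℂ) = z + ((lam ^ 2 * s : ℝ) : ℂ) := by
    push_cast; ring
  have hslit : z + ((lam ^ 2 * s : ℝ) : ℂ) ∈ slitPlane := by
    rw [mem_slitPlane_iff]
    by_contra! h
    exact hcut ⟨h.2, h.1⟩
  have hbound := hC z (hzb ▸ hslit) (hzb ▸ hzδ.le)
  rw [hzb, exp_mul_fDensity_neg_sq_mul k α lam hs hlam.ne'] at hbound
  calc _ = ‖(exp (-z) * (∫ x in Iic (-(lam ^ 2 * s)), fDensity k α lam x / ((x : ℂ) - z)) -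
          (((lam ^ 2 * s) ^ α * Real.exp (-(2 / s ^ k)) : ℝ) : ℂ) *
            log (z + ((lam ^ 2 * s : ℝ) : ℂ))) / (2 * Real.pi * I)‖ := by
        rw [fFun_eq]; congr 1; ring
    _ ≤ max C 1 := (norm_div_two_pi_I_le _).trans (hbound.trans (le_max_left _ _))

/-- Logarithmic singularity of `f(·;λ)` at the endpoint `−λ²s`:
`f(z;λ) = ((λ²s)^α e^{−2/s^k}/(2πi)) Log(z+λ²s) + O(1)` as `z → −λ²s` off the cut. -/
theorem fFun_log_singularity_at_endpoint (k : ℕ) (hk : 1 ≤ k) (α s : ℝ)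
    (hα : -1 < α) (hs : 0 < s) (lam : ℝ) (hlam : 0 < lam) :
    ∃ δ > (0 : ℝ), ∃ C > (0 : ℝ), ∀ z : ℂ,
      0 < ‖z + (lam ^ 2 * s : ℝ)‖ →
      ‖z + (lam ^ 2 * s : ℝ)‖ < δ →
      ¬((z + (lam ^ 2 * s : ℝ)).im = 0 ∧ (z + (lam ^ 2 * s : ℝ)).re ≤ 0) →
      ‖fFun k α s lam z -
          ((((lam ^ 2 * s) ^ α * Real.exp (-(2 / s ^ k)) : ℝ)) : ℂ)
            / (2 * Real.pi * Complex.I) * Complex.log (z + (lam ^ 2 * s : ℝ))‖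
        ≤ C :=
  fFun_log_singularity_at_endpoint_general k α s hs lam hlam
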